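/- Let C be an n×n complex matrix with ‖C‖ ≤ 1 and set D = I − C*C. For integers k ≥ 1, 0 ≤ m ≤ k and 0 ≤ ℓ ≤ k−m, let Ω_{k,m,ℓ}(C) denote the sum of tr(w) over all words w of length k in the three letters {C, C*, D} having exactly m letters equal to D and exactly ℓ letters equal to C*. Then the following are equivalent: (i) for every τ ∈ ℝ, the characteristic polynomial of H_C(θ) + τD = (1/2)(e^{−iθ}C + e^{iθ}C*) + τ(I − C*C) is independent of θ ∈ ℝ; (ii) for every k with 1 ≤ k ≤ n, every m with 0 ≤ m ≤ k, and every ℓ with 0 ≤ ℓ ≤ k−m and 2ℓ ≠ k−m, one has Ω_{k,m,ℓ}(C) = 0. -/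

import Mathlib

open Matrix Complex

/-- `H_M(θ) = (1/2)(e^{-iθ} M + e^{iθ} Mᴴ)`. -/
noncomputable def Hmat {ι : Type*} [Fintype ι] [DecidableEq ι]
    (M : Matrix ι ι ℂ) (θ : ℝ) : Matrix ι ι ℂ :=
  (1 / 2 : ℂ) • (Complex.exp (-(θ : ℂ) * Complex.I) • M
    + Complex.exp ((θ : ℂ) * Complex.I) • Mᴴ)

/-- `Ω_{k,m,ℓ}(C)`: the sum of the traces of all words of length `k` in the
letters `C`, `Cᴴ` and `D = 1 - Cᴴ * C` having exactly `m` letters `D` and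
exactly `ℓ` letters `Cᴴ`.  A word is encoded as a function `Fin k → Fin 3`
where `0`, `1`, `2` stand for `C`, `Cᴴ` and `D` respectively. -/
noncomputable def Omega (n k m ℓ : ℕ) (C : Matrix (Fin n) (Fin n) ℂ) : ℂ :=
  ∑ w ∈ Finset.univ.filter (fun w : Fin k → Fin 3 =>
      (Finset.univ.filter fun i => w i = 2).card = m ∧
      (Finset.univ.filter fun i => w i = 1).card = ℓ),
    Matrix.trace ((List.ofFn fun i => ![C, Cᴴ, 1 - Cᴴ * C] (w i)).prod)

open Polynomial

lemma pow_eq_sum_words {ι : Type*} [Fintype ι] [DecidableEq ι] (A : Fin 3 → Matrix ι ι ℂ) :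
    ∀ k : ℕ, (∑ j, A j) ^ k = ∑ w : Fin k → Fin 3, (List.ofFn fun i => A (w i)).prod
  | 0 => by simp
  | (k+1) => by
      rw [pow_succ', pow_eq_sum_words A k, Finset.sum_mul]
      simp_rw [Finset.mul_sum]
      rw [← Equiv.sum_comp (Fin.consEquiv (fun _ : Fin (k+1) => Fin 3))
        (fun w => (List.ofFn fun i => A (w i)).prod), Fintype.sum_prod_type]
      apply Finset.sum_congr rfl
      intro j _
      apply Finset.sum_congr rfl
      intro w _
      simp only [Fin.consEquiv_apply, List.ofFn_succ, List.prod_cons, Fin.cons_zero, Fin.cons_succ]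

lemma prod_ofFn_smul {ι : Type*} [Fintype ι] [DecidableEq ι] :
    ∀ (k : ℕ) (c : Fin k → ℂ) (M : Fin k → Matrix ι ι ℂ),
    (List.ofFn fun i => c i • M i).prod = (∏ i, c i) • (List.ofFn fun i => M i).prod
  | 0, c, M => by simp
  | (k+1), c, M => by
      rw [List.ofFn_succ, List.ofFn_succ, List.prod_cons, List.prod_cons,
        prod_ofFn_smul k (fun i => c i.succ) (fun i => M i.succ), Fin.prod_univ_succ,
        smul_mul_assoc, mul_smul_comm, smul_smul]
lemma card_filter_sum (k : ℕ) (w : Fin k → Fin 3) :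
    ∑ j : Fin 3, (Finset.univ.filter fun i => w i = j).card = k := by
  rw [← Finset.card_eq_sum_card_fiberwise (fun i _ => Finset.mem_univ (w i))]
  simp

lemma Omega_eq_zero_of_lt (n k m ℓ : ℕ) (C : Matrix (Fin n) (Fin n) ℂ) (h : k < m + ℓ) :
    Omega n k m ℓ C = 0 := by
  unfold Omega
  convert Finset.sum_empty
  rw [Finset.filter_eq_empty_iff]
  rintro w - ⟨h2, h1⟩
  have hd : Disjoint (Finset.univ.filter fun i => w i = 2)
      (Finset.univ.filter fun i => w i = 1) := by
    rw [Finset.disjoint_left]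
    intro a ha hb
    simp only [Finset.mem_filter] at ha hb
    exact absurd (ha.2.symm.trans hb.2) (by decide)
  have hcu := Finset.card_union_of_disjoint hd
  have hle := Finset.card_le_univ ((Finset.univ.filter fun i => w i = 2)
    ∪ (Finset.univ.filter fun i => w i = 1))
  rw [hcu, h2, h1] at hle
  simp only [Finset.card_univ, Fintype.card_fin] at hle
  omega

lemma trace_T_pow (n k : ℕ) (C : Matrix (Fin n) (Fin n) ℂ) (τ θ : ℝ) :
    Matrix.trace ((Hmat C θ + (τ:ℂ) • (1 - Cᴴ * C)) ^ k) =
      ∑ m ∈ Finset.range (k+1), ∑ ℓ ∈ Finset.range (k - m + 1),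
        ((1/2 : ℂ) * Complex.exp (-(θ:ℂ)*Complex.I)) ^ (k - m - ℓ) *
        (((1/2 : ℂ) * Complex.exp ((θ:ℂ)*Complex.I)) ^ ℓ * ((τ:ℂ) ^ m * Omega n k m ℓ C)) := by
  classical
  set c : Fin 3 → ℂ := ![(1/2 : ℂ) * Complex.exp (-(θ:ℂ)*Complex.I),
    (1/2 : ℂ) * Complex.exp ((θ:ℂ)*Complex.I), (τ:ℂ)] with hc
  set Mw : Fin 3 → Matrix (Fin n) (Fin n) ℂ := ![C, Cᴴ, 1 - Cᴴ * C] with hMw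
  have hT : Hmat C θ + (τ:ℂ) • (1 - Cᴴ * C) = ∑ j, c j • Mw j := by
    rw [Fin.sum_univ_three]
    show _ = ((1/2 : ℂ) * Complex.exp (-(θ:ℂ)*Complex.I)) • C
      + ((1/2 : ℂ) * Complex.exp ((θ:ℂ)*Complex.I)) • Cᴴ + (τ:ℂ) • (1 - Cᴴ * C)
    unfold Hmat
    rw [smul_add, smul_smul, smul_smul]
  rw [hT, pow_eq_sum_words (fun j => c j • Mw j) k, Matrix.trace_sum]
  have hterm : ∀ w : Fin k → Fin 3,
      Matrix.trace (List.ofFn fun i => c (w i) • Mw (w i)).prod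
        = (∏ i, c (w i)) * Matrix.trace (List.ofFn fun i => Mw (w i)).prod := by
    intro w
    rw [prod_ofFn_smul k (fun i => c (w i)) (fun i => Mw (w i)), Matrix.trace_smul, smul_eq_mul]
  calc ∑ w : Fin k → Fin 3, Matrix.trace (List.ofFn fun i => c (w i) • Mw (w i)).prod
      = ∑ w : Fin k → Fin 3, (∏ i, c (w i)) * Matrix.trace (List.ofFn fun i => Mw (w i)).prod :=
        Finset.sum_congr rfl fun w _ => hterm w
    _ = ∑ p ∈ Finset.range (k+1) ×ˢ Finset.range (k+1),
          ∑ w ∈ Finset.univ.filter (fun w : Fin k → Fin 3 =>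
            ((Finset.univ.filter fun i => w i = 2).card,
             (Finset.univ.filter fun i => w i = 1).card) = p),
            (∏ i, c (w i)) * Matrix.trace (List.ofFn fun i => Mw (w i)).prod := by
        rw [Finset.sum_fiberwise_of_maps_to]
        intro w _
        rw [Finset.mem_product, Finset.mem_range, Finset.mem_range]
        constructor <;>
          exact Nat.lt_succ_of_le (by dsimp only; exact (Finset.card_le_univ _).trans_eq (by
            exact Fintype.card_fin k))
    _ = ∑ m ∈ Finset.range (k+1), ∑ ℓ ∈ Finset.range (k+1),
          ((1/2 : ℂ) * Complex.exp (-(θ:ℂ)*Complex.I)) ^ (k - m - ℓ) *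
          (((1/2 : ℂ) * Complex.exp ((θ:ℂ)*Complex.I)) ^ ℓ * ((τ:ℂ) ^ m * Omega n k m ℓ C)) := by
        rw [Finset.sum_product]
        apply Finset.sum_congr rfl; intro m hm
        apply Finset.sum_congr rfl; intro ℓ hℓ
        have step : ∀ w ∈ Finset.univ.filter (fun w : Fin k → Fin 3 =>
            ((Finset.univ.filter fun i => w i = 2).card,
             (Finset.univ.filter fun i => w i = 1).card) = (m, ℓ)),
            (∏ i, c (w i)) * Matrix.trace (List.ofFn fun i => Mw (w i)).prod
              = (c 0 ^ (k - m - ℓ) * (c 1 ^ ℓ * c 2 ^ m)) *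
                Matrix.trace (List.ofFn fun i => Mw (w i)).prod := by
          intro w hw
          simp only [Finset.mem_filter, Prod.mk.injEq] at hw
          congr 1
          have hfib := Finset.prod_fiberwise_of_maps_to
            (fun i (_ : i ∈ (Finset.univ : Finset (Fin k))) => Finset.mem_univ (w i))
            (fun i => c (w i))
          rw [← hfib]
          have hconst : ∀ j : Fin 3, ∏ i ∈ Finset.univ.filter (fun i => w i = j), c (w i)
              = c j ^ (Finset.univ.filter fun i => w i = j).card := by
            intro j
            rw [Finset.prod_congr rfl (fun i hi => by rw [(Finset.mem_filter.mp hi).2]),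
              Finset.prod_const]
          rw [Fin.prod_univ_three]
          rw [hconst 0, hconst 1, hconst 2, hw.2.1, hw.2.2]
          have hsum := card_filter_sum k w
          rw [Fin.sum_univ_three, hw.2.1, hw.2.2] at hsum
          have h0 : (Finset.univ.filter fun i => w i = 0).card = k - m - ℓ := by omega
          rw [h0]
          ring
        rw [Finset.sum_congr rfl step, ← Finset.mul_sum]
        have hΩ : ∑ w ∈ Finset.univ.filter (fun w : Fin k → Fin 3 =>
            ((Finset.univ.filter fun i => w i = 2).card,
             (Finset.univ.filter fun i => w i = 1).card) = (m, ℓ)),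
            Matrix.trace (List.ofFn fun i => Mw (w i)).prod = Omega n k m ℓ C := by
          unfold Omega
          rw [hMw]
          apply Finset.sum_congr _ (fun w _ => rfl)
          apply Finset.filter_congr
          intro w _
          simp [Prod.ext_iff]
        rw [hΩ]
        show c 0 ^ (k - m - ℓ) * (c 1 ^ ℓ * c 2 ^ m) * Omega n k m ℓ C = _
        have hc0 : c 0 = (1/2 : ℂ) * Complex.exp (-(θ:ℂ)*Complex.I) := rfl
        have hc1 : c 1 = (1/2 : ℂ) * Complex.exp ((θ:ℂ)*Complex.I) := rfl
        have hc2 : c 2 = (τ:ℂ) := rfl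
        rw [hc0, hc1, hc2]; ring
    _ = _ := by
        apply Finset.sum_congr rfl; intro m hm
        rw [Finset.mem_range, Nat.lt_succ_iff] at hm
        refine (Finset.sum_subset ?_ ?_).symm
        · intro x hx
          rw [Finset.mem_range] at hx ⊢
          omega
        · intro ℓ hℓ hℓ'
          rw [Finset.mem_range, Nat.lt_succ_iff] at hℓ
          rw [Finset.mem_range, Nat.lt_succ_iff] at hℓ'
          rw [Omega_eq_zero_of_lt n k m ℓ C (by omega)]
          ring
lemma T_isHermitian (n : ℕ) (C : Matrix (Fin n) (Fin n) ℂ) (τ θ : ℝ) :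
    (Hmat C θ + (τ:ℂ) • (1 - Cᴴ * C)).IsHermitian := by
  have hD : (1 - Cᴴ * C).IsHermitian :=
    Matrix.isHermitian_one.sub (by simpa using Matrix.isHermitian_mul_conjTranspose_self Cᴴ)
  have hτD : ((τ:ℂ) • (1 - Cᴴ * C)).IsHermitian := by
    unfold Matrix.IsHermitian
    rw [Matrix.conjTranspose_smul, hD.eq]
    congr 1
    exact Complex.conj_ofReal τ
  have hH : (Hmat C θ).IsHermitian := by
    have h1 : star (1/2 : ℂ) = (1/2 : ℂ) := by
      rw [Complex.star_def, map_div₀, _root_.map_one, map_ofNat]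
    have h2 : star (Complex.exp (-(θ:ℂ) * Complex.I)) = Complex.exp ((θ:ℂ) * Complex.I) := by
      rw [Complex.star_def, ← Complex.exp_conj]
      congr 1
      simp [Complex.conj_I, Complex.conj_ofReal]
    have h3 : star (Complex.exp ((θ:ℂ) * Complex.I)) = Complex.exp (-(θ:ℂ) * Complex.I) := by
      rw [Complex.star_def, ← Complex.exp_conj]
      congr 1
      simp [Complex.conj_I, Complex.conj_ofReal]
    unfold Matrix.IsHermitian Hmat
    rw [Matrix.conjTranspose_smul, Matrix.conjTranspose_add, Matrix.conjTranspose_smul,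
      Matrix.conjTranspose_smul, Matrix.conjTranspose_conjTranspose, h1, h2, h3, add_comm]
  exact hH.add hτD

lemma exp_circle_infinite :
    (Set.range fun θ : ℝ => Complex.exp ((θ:ℂ) * Complex.I)).Infinite := by
  have hinj : Set.InjOn (fun θ : ℝ => Complex.exp ((θ:ℂ) * Complex.I)) (Set.Ioo 0 1) := by
    intro x hx y hy hxy
    simp only [Complex.exp_eq_exp_iff_exists_int] at hxy
    obtain ⟨N, hN⟩ := hxy
    have h2 : ((x:ℂ) - y - N * (2 * Real.pi)) * Complex.I = 0 := by
      linear_combination hN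
    rcases mul_eq_zero.mp h2 with h3 | h3
    · have h4 : x - y - N * (2 * Real.pi) = 0 := by exact_mod_cast h3
      have hπ := Real.pi_gt_three
      have hxy' : x - y = N * (2 * Real.pi) := by linarith
      have hb : |x - y| < 1 := by
        rw [abs_sub_lt_iff]
        exact ⟨by linarith [hx.1, hx.2, hy.1, hy.2], by linarith [hx.1, hx.2, hy.1, hy.2]⟩
      have hN0 : N = 0 := by
        by_contra hne
        have h1 : (1:ℝ) ≤ |(N:ℝ)| := by exact_mod_cast Int.one_le_abs hne
        have habs : |x - y| = |(N:ℝ)| * (2 * Real.pi) := by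
          rw [hxy', abs_mul, abs_of_pos Real.two_pi_pos]
        nlinarith
      rw [hN0] at hxy'
      push_cast at hxy'
      linarith
    · exact absurd h3 Complex.I_ne_zero
  exact ((Set.Ioo_infinite (by norm_num : (0:ℝ) < 1)).image hinj).mono
    (Set.image_subset_range _ _)

lemma ofReal_range_infinite : (Set.range fun τ : ℝ => (τ:ℂ)).Infinite :=
  Set.infinite_range_of_injective Complex.ofReal_injective

lemma charpoly_conj_aux {N : Type*} [Fintype N] [DecidableEq N] (U V A : Matrix N N ℂ)
    (hUV : U * V = 1) : (U * A * V).charpoly = A.charpoly := by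
  let m : Matrix N N ℂ →+* Matrix N N ℂ[X] := (C : ℂ →+* ℂ[X]).mapMatrix
  have hm : m U * m V = 1 := by rw [← _root_.map_mul, hUV, _root_.map_one]
  have hc : Commute (scalar N (X : ℂ[X])) (m V) :=
    scalar_commute (X : ℂ[X]) (fun r' => Commute.all _ _) (m V)
  have key : charmatrix (U * A * V) = m U * charmatrix A * m V := by
    unfold charmatrix
    rw [mul_sub, sub_mul]
    congr 1
    · rw [mul_assoc, hc.eq, ← mul_assoc, hm, one_mul]
    · show m (U*A*V) = _
      rw [_root_.map_mul, _root_.map_mul]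
  have hdet : (m U).det * (m V).det = 1 := by rw [← det_mul, hm, det_one]
  rw [Matrix.charpoly, Matrix.charpoly, key, det_mul, det_mul]
  calc (m U).det * (charmatrix A).det * (m V).det
      = (charmatrix A).det * ((m U).det * (m V).det) := by ring
    _ = (charmatrix A).det := by rw [hdet, mul_one]
lemma charpoly_diagonal_aux {N : Type*} [Fintype N] [DecidableEq N] (d : N → ℂ) :
    (diagonal d).charpoly = ∏ i, (X - C (d i)) := by
  have : charmatrix (diagonal d) = diagonal (fun i => (X : ℂ[X]) - C (d i)) := by
    ext i j
    by_cases h : i = j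
    · subst h; simp
    · simp [h, charmatrix_apply_ne _ _ _ h, diagonal_apply_ne _ h]
  rw [Matrix.charpoly, this, det_diagonal]

lemma conj_pow_aux {N : Type*} [Fintype N] [DecidableEq N] (U V D : Matrix N N ℂ)
    (hUV : U * V = 1) (hVU : V * U = 1) (k : ℕ) : (U * D * V) ^ k = U * D ^ k * V := by
  induction k with
  | zero => simp [hUV]
  | succ k ih =>
      rw [pow_succ, ih, pow_succ]
      calc U * D ^ k * V * (U * D * V) = U * D ^ k * (V * U) * D * V := by
            simp only [Matrix.mul_assoc]
        _ = U * (D ^ k * D) * V := by rw [hVU, Matrix.mul_one]; simp only [Matrix.mul_assoc]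

lemma herm_trace_pow {N : Type*} [Fintype N] [DecidableEq N] {A : Matrix N N ℂ}
    (hA : A.IsHermitian) (k : ℕ) :
    Matrix.trace (A ^ k) = ∑ i, ((hA.eigenvalues i : ℂ)) ^ k := by
  set U : Matrix N N ℂ := (hA.eigenvectorUnitary : Matrix N N ℂ) with hU
  have hVU : star U * U = 1 := Unitary.coe_star_mul_self hA.eigenvectorUnitary
  have hUV : U * star U = 1 := Unitary.coe_mul_star_self hA.eigenvectorUnitary
  have h := hA.spectral_theorem
  have key : Matrix.trace ((U * diagonal (RCLike.ofReal ∘ hA.eigenvalues) * star U) ^ k)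
      = ∑ i, ((hA.eigenvalues i : ℂ)) ^ k := by
    rw [conj_pow_aux _ _ _ hUV hVU, Matrix.trace_mul_cycle, hVU,
      Matrix.one_mul, diagonal_pow, trace_diagonal]
    simp [Function.comp]
  rw [Unitary.conjStarAlgAut_apply, ← hU] at h
  rw [← h] at key
  exact key

lemma herm_charpoly {N : Type*} [Fintype N] [DecidableEq N] {A : Matrix N N ℂ}
    (hA : A.IsHermitian) :
    A.charpoly = ∏ i, (X - C ((hA.eigenvalues i : ℂ))) := by
  set U : Matrix N N ℂ := (hA.eigenvectorUnitary : Matrix N N ℂ) with hU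
  have hUV : U * star U = 1 := Unitary.coe_mul_star_self hA.eigenvectorUnitary
  have h := hA.spectral_theorem
  have key : (U * diagonal (RCLike.ofReal ∘ hA.eigenvalues) * star U).charpoly
      = ∏ i, (X - C ((hA.eigenvalues i : ℂ))) := by
    rw [charpoly_conj_aux _ _ _ hUV, charpoly_diagonal_aux]
    simp [Function.comp]
  rw [Unitary.conjStarAlgAut_apply, ← hU] at h
  rw [← h] at key
  exact key
open MvPolynomial in
lemma esymm_aeval_eq (N : ℕ) (v w : Fin N → ℂ)
    (h : ∀ k, 1 ≤ k → k ≤ N → ∑ i, v i ^ k = ∑ i, w i ^ k) :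
    ∀ k, k ≤ N → aeval v (esymm (Fin N) ℂ k) = aeval w (esymm (Fin N) ℂ k) := by
  intro k
  induction k using Nat.strong_induction_on with
  | _ k ih =>
    intro hk
    rcases Nat.eq_zero_or_pos k with rfl | hk0
    · simp
    have haev : ∀ u : Fin N → ℂ, ∀ b, aeval u (psum (Fin N) ℂ b) = ∑ i, u i ^ b := by
      intro u b; simp [psum]
    have key : ∀ u : Fin N → ℂ,
        (k : ℂ) * aeval u (esymm (Fin N) ℂ k) = (-1) ^ (k + 1) *
          ∑ a ∈ Finset.HasAntidiagonal.antidiagonal k with a.1 < k,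
            (-1 : ℂ) ^ a.1 * aeval u (esymm (Fin N) ℂ a.1) * aeval u (psum (Fin N) ℂ a.2) := by
      intro u
      have := congrArg (MvPolynomial.aeval u) (MvPolynomial.mul_esymm_eq_sum (Fin N) ℂ k)
      simpa [_root_.map_mul, map_sum, map_pow] using this
    have heq : (k : ℂ) * aeval v (esymm (Fin N) ℂ k) = (k : ℂ) * aeval w (esymm (Fin N) ℂ k) := by
      rw [key v, key w]
      congr 1
      apply Finset.sum_congr rfl
      intro a ha
      simp only [Finset.mem_filter, Finset.HasAntidiagonal.mem_antidiagonal] at ha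
      have h1 : a.1 < k := ha.2
      have h2 : 1 ≤ a.2 := by omega
      have h3 : a.2 ≤ N := by omega
      simp only [haev]
      rw [ih a.1 h1 (by omega), h a.2 h2 h3]
    exact mul_left_cancel₀ (by exact_mod_cast hk0.ne' : (k : ℂ) ≠ 0) heq

lemma prod_univ_X_sub_C (N : ℕ) (u : Fin N → ℂ) :
    ∏ i, (X - C (u i)) = ((Finset.univ.val.map u).map (fun t => X - C t)).prod := by
  rw [Multiset.map_map]; rfl

lemma prod_eq_of_psum (N : ℕ) (v w : Fin N → ℂ)
    (h : ∀ k, 1 ≤ k → k ≤ N → ∑ i, v i ^ k = ∑ i, w i ^ k) :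
    ∏ i, (X - C (v i)) = ∏ i, (X - C (w i)) := by
  rw [prod_univ_X_sub_C, prod_univ_X_sub_C, Multiset.prod_X_sub_X_eq_sum_esymm,
    Multiset.prod_X_sub_X_eq_sum_esymm]
  have hcard : ∀ u : Fin N → ℂ, Multiset.card (Finset.univ.val.map u) = N := by
    intro u; simp
  rw [hcard, hcard]
  apply Finset.sum_congr rfl
  intro j hj
  have hj' : j ≤ N := Nat.lt_succ_iff.mp (Finset.mem_range.mp hj)
  have heq := esymm_aeval_eq N v w h j hj'
  rw [MvPolynomial.aeval_esymm_eq_multiset_esymm, MvPolynomial.aeval_esymm_eq_multiset_esymm]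
    at heq
  rw [heq]

lemma charpoly_eq_of_trace_pow {n : ℕ} {A B : Matrix (Fin n) (Fin n) ℂ}
    (hA : A.IsHermitian) (hB : B.IsHermitian)
    (h : ∀ k, 1 ≤ k → k ≤ n → Matrix.trace (A ^ k) = Matrix.trace (B ^ k)) :
    A.charpoly = B.charpoly := by
  rw [herm_charpoly hA, herm_charpoly hB]
  exact prod_eq_of_psum n _ _
    (fun k h1 h2 => by rw [← herm_trace_pow hA, ← herm_trace_pow hB]; exact h k h1 h2)

lemma trace_pow_eq_of_charpoly {n : ℕ} {A B : Matrix (Fin n) (Fin n) ℂ}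
    (hA : A.IsHermitian) (hB : B.IsHermitian) (h : A.charpoly = B.charpoly) (k : ℕ) :
    Matrix.trace (A ^ k) = Matrix.trace (B ^ k) := by
  rw [herm_trace_pow hA, herm_trace_pow hB]
  have hp : (∏ i, (X - C ((hA.eigenvalues i : ℂ)))) = ∏ i, (X - C ((hB.eigenvalues i : ℂ))) := by
    rw [← herm_charpoly hA, ← herm_charpoly hB]; exact h
  rw [prod_univ_X_sub_C, prod_univ_X_sub_C] at hp
  have hroots := congrArg Polynomial.roots hp
  rw [Polynomial.roots_multiset_prod_X_sub_C, Polynomial.roots_multiset_prod_X_sub_C] at hroots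
  have hsum : ∀ u : Fin n → ℂ,
      ∑ i, u i ^ k = ((Finset.univ.val.map u).map (fun t => t ^ k)).sum := by
    intro u; rw [Multiset.map_map]; rfl
  rw [hsum, hsum, hroots]
theorem stmt5 (n : ℕ) (C : Matrix (Fin n) (Fin n) ℂ)
    (hC : ‖Matrix.toEuclideanCLM (𝕜 := ℂ) C‖ ≤ 1) :
    (∀ τ : ℝ, ∀ θ : ℝ,
        (Hmat C θ + (τ : ℂ) • (1 - Cᴴ * C)).charpoly
          = (Hmat C 0 + (τ : ℂ) • (1 - Cᴴ * C)).charpoly) ↔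
    (∀ k m ℓ : ℕ, 1 ≤ k → k ≤ n → m ≤ k → ℓ ≤ k - m → 2 * ℓ ≠ k - m →
        Omega n k m ℓ C = 0) := by
  constructor
  · -- charpoly independence → Ω vanishing
    intro h k m ℓ hk1 hkn hm hℓ h2
    have htr : ∀ τ θ : ℝ,
        Matrix.trace ((Hmat C θ + (τ:ℂ) • (1 - Cᴴ * C)) ^ k)
          = Matrix.trace ((Hmat C 0 + (τ:ℂ) • (1 - Cᴴ * C)) ^ k) :=
      fun τ θ => trace_pow_eq_of_charpoly (T_isHermitian n C τ θ) (T_isHermitian n C τ 0)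
        (h τ θ) k
    have key : ∀ τ θ : ℝ,
        (∑ m' ∈ Finset.range (k+1), ∑ ℓ' ∈ Finset.range (k - m' + 1),
          ((1/2:ℂ) * Complex.exp (-(θ:ℂ)*Complex.I)) ^ (k - m' - ℓ') *
          (((1/2:ℂ) * Complex.exp ((θ:ℂ)*Complex.I)) ^ ℓ' * ((τ:ℂ) ^ m' * Omega n k m' ℓ' C)))
        = ∑ m' ∈ Finset.range (k+1), ∑ ℓ' ∈ Finset.range (k - m' + 1),
          ((1/2:ℂ)) ^ (k - m' - ℓ') *
          (((1/2:ℂ)) ^ ℓ' * ((τ:ℂ) ^ m' * Omega n k m' ℓ' C)) := by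
      intro τ θ
      have h1 := trace_T_pow n k C τ θ
      have h0 := trace_T_pow n k C τ 0
      simp only [Complex.ofReal_zero, neg_zero, zero_mul, Complex.exp_zero, mul_one] at h0
      rw [← h1, ← h0]
      exact htr τ θ
    -- Step 1 : for every θ the coefficient of τ^m vanishes
    have hd : ∀ θ : ℝ,
        (∑ ℓ' ∈ Finset.range (k - m + 1),
          (((1/2:ℂ) * Complex.exp (-(θ:ℂ)*Complex.I)) ^ (k - m - ℓ') *
           ((1/2:ℂ) * Complex.exp ((θ:ℂ)*Complex.I)) ^ ℓ'
           - (1/2:ℂ) ^ (k - m - ℓ') * (1/2:ℂ) ^ ℓ') * Omega n k m ℓ' C) = 0 := by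
      intro θ
      set dcoef : ℕ → ℂ := fun m' => ∑ ℓ' ∈ Finset.range (k - m' + 1),
        (((1/2:ℂ) * Complex.exp (-(θ:ℂ)*Complex.I)) ^ (k - m' - ℓ') *
         ((1/2:ℂ) * Complex.exp ((θ:ℂ)*Complex.I)) ^ ℓ'
         - (1/2:ℂ) ^ (k - m' - ℓ') * (1/2:ℂ) ^ ℓ') * Omega n k m' ℓ' C with hdcoef
      set p : Polynomial ℂ :=
        ∑ m' ∈ Finset.range (k+1), Polynomial.C (dcoef m') * Polynomial.X ^ m' with hp
      have heval : ∀ τ : ℝ, p.eval (τ:ℂ) = 0 := by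
        intro τ
        have hk := key τ θ
        rw [← sub_eq_zero, ← Finset.sum_sub_distrib] at hk
        simp_rw [← Finset.sum_sub_distrib] at hk
        rw [← hk]
        rw [hp]
        rw [Polynomial.eval_finset_sum]
        simp only [Polynomial.eval_mul, Polynomial.eval_C, Polynomial.eval_pow,
          Polynomial.eval_X]
        apply Finset.sum_congr rfl
        intro m' _
        rw [hdcoef]
        simp only
        rw [Finset.sum_mul]
        apply Finset.sum_congr rfl
        intro ℓ' _
        ring
      have hp0 : p = 0 := by
        apply Polynomial.eq_zero_of_infinite_isRoot
        exact ofReal_range_infinite.mono (by rintro - ⟨τ, rfl⟩; exact heval τ)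
      have hpm : p.coeff m = dcoef m := by
        rw [hp, Polynomial.finset_sum_coeff]
        simp only [Polynomial.coeff_C_mul, Polynomial.coeff_X_pow]
        rw [Finset.sum_eq_single m]
        · simp
        · intro b _ hb
          simp [Ne.symm hb]
        · intro hmem
          exact absurd (Finset.mem_range.mpr (Nat.lt_succ_of_le hm)) hmem
      have h3 : dcoef m = 0 := by rw [← hpm, hp0, Polynomial.coeff_zero]
      rw [hdcoef] at h3
      simpa using h3
    -- Step 2 : the trigonometric polynomial argument
    set e := k - m with he
    set q : Polynomial ℂ := ∑ ℓ' ∈ Finset.range (e+1),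
      Polynomial.C ((1/2:ℂ) ^ e * Omega n k m ℓ' C) *
        (Polynomial.X ^ (2*ℓ') - Polynomial.X ^ e) with hq
    have hqeval : ∀ θ : ℝ, q.eval (Complex.exp ((θ:ℂ) * Complex.I)) = 0 := by
      intro θ
      have hz : Complex.exp (-(θ:ℂ)*Complex.I) * Complex.exp ((θ:ℂ)*Complex.I) = 1 := by
        rw [← Complex.exp_add, show (-(θ:ℂ)*Complex.I + (θ:ℂ)*Complex.I) = 0 by ring,
          Complex.exp_zero]
      have hmain := hd θ
      have hqe : q.eval (Complex.exp ((θ:ℂ) * Complex.I)) =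
          (∑ ℓ' ∈ Finset.range (e + 1),
            (((1/2:ℂ) * Complex.exp (-(θ:ℂ)*Complex.I)) ^ (e - ℓ') *
             ((1/2:ℂ) * Complex.exp ((θ:ℂ)*Complex.I)) ^ ℓ'
             - (1/2:ℂ) ^ (e - ℓ') * (1/2:ℂ) ^ ℓ') * Omega n k m ℓ' C)
            * (Complex.exp ((θ:ℂ)*Complex.I)) ^ e := by
        rw [hq, Polynomial.eval_finset_sum]
        simp only [Polynomial.eval_mul, Polynomial.eval_C, Polynomial.eval_sub,
          Polynomial.eval_pow, Polynomial.eval_X]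
        rw [Finset.sum_mul]
        apply Finset.sum_congr rfl
        intro ℓ' hℓ'
        rw [Finset.mem_range, Nat.lt_succ_iff] at hℓ'
        set z := Complex.exp ((θ:ℂ)*Complex.I) with hzdef
        set zi := Complex.exp (-(θ:ℂ)*Complex.I) with hzidef
        have ha : (e - ℓ') + ℓ' = e := by omega
        have key2 : zi ^ (e - ℓ') * z ^ (e - ℓ') = 1 := by
          rw [← mul_pow, hz, one_pow]
        have hsplit : z ^ e = z ^ (e - ℓ') * z ^ ℓ' := by rw [← pow_add, ha]
        have h2l : z ^ (2*ℓ') = z ^ ℓ' * z ^ ℓ' := by rw [← pow_add, two_mul]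
        have hhalf : (1/2:ℂ) ^ e = (1/2:ℂ) ^ (e - ℓ') * (1/2:ℂ) ^ ℓ' := by
          rw [← pow_add, ha]
        rw [hsplit, h2l, hhalf, mul_pow, mul_pow]
        linear_combination (-( (1/2:ℂ) ^ (e - ℓ') * (1/2:ℂ) ^ ℓ' * z ^ ℓ' * z ^ ℓ'
          * Omega n k m ℓ' C)) * key2
      rw [hqe, hmain, zero_mul]
    have hq0 : q = 0 := by
      apply Polynomial.eq_zero_of_infinite_isRoot
      exact exp_circle_infinite.mono (by rintro - ⟨θ, rfl⟩; exact hqeval θ)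
    have hcoeff : q.coeff (2*ℓ) = (1/2:ℂ) ^ e * Omega n k m ℓ C := by
      rw [hq, Polynomial.finset_sum_coeff]
      simp only [Polynomial.coeff_C_mul, Polynomial.coeff_sub, Polynomial.coeff_X_pow]
      have hterm : ∀ ℓ' ∈ Finset.range (e+1),
          (1/2:ℂ) ^ e * Omega n k m ℓ' C *
            ((if 2*ℓ = 2*ℓ' then (1:ℂ) else 0) - if 2*ℓ = e then (1:ℂ) else 0)
          = if ℓ' = ℓ then (1/2:ℂ) ^ e * Omega n k m ℓ C else 0 := by
        intro ℓ' _
        rw [if_neg h2]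
        by_cases hee : ℓ' = ℓ
        · subst hee
          rw [if_pos rfl, if_pos rfl]
          ring
        · rw [if_neg (fun hc => hee (by omega)), if_neg hee]
          ring
      rw [Finset.sum_congr rfl hterm, Finset.sum_ite_eq' (Finset.range (e+1)) ℓ
        (fun _ => (1/2:ℂ) ^ e * Omega n k m ℓ C),
        if_pos (Finset.mem_range.mpr (Nat.lt_succ_of_le hℓ))]
    rw [hq0, Polynomial.coeff_zero] at hcoeff
    have hhalf : ((1/2:ℂ) ^ e) ≠ 0 := pow_ne_zero e (by norm_num)
    exact (mul_eq_zero.mp hcoeff.symm).resolve_left hhalf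
  · -- Ω vanishing → charpoly independence
    intro hΩ τ θ
    apply charpoly_eq_of_trace_pow (T_isHermitian n C τ θ) (T_isHermitian n C τ 0)
    intro k hk1 hkn
    have h1 := trace_T_pow n k C τ θ
    have h0 := trace_T_pow n k C τ 0
    simp only [Complex.ofReal_zero, neg_zero, zero_mul, Complex.exp_zero, mul_one] at h0
    rw [h1, h0]
    apply Finset.sum_congr rfl
    intro m hm
    rw [Finset.mem_range, Nat.lt_succ_iff] at hm
    apply Finset.sum_congr rfl
    intro ℓ hℓ
    rw [Finset.mem_range, Nat.lt_succ_iff] at hℓ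
    by_cases h2 : 2 * ℓ = k - m
    · have hkml : k - m - ℓ = ℓ := by omega
      rw [hkml]
      have hab : ((1/2:ℂ) * Complex.exp (-(θ:ℂ)*Complex.I)) *
          ((1/2:ℂ) * Complex.exp ((θ:ℂ)*Complex.I)) = (1/2:ℂ) * (1/2:ℂ) := by
        rw [mul_mul_mul_comm, ← Complex.exp_add,
          show (-(θ:ℂ)*Complex.I + (θ:ℂ)*Complex.I) = 0 by ring, Complex.exp_zero, mul_one]
      rw [← mul_assoc, ← mul_pow, hab, mul_pow, mul_assoc]
    · rw [hΩ k m ℓ hk1 hkn hm hℓ h2]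
      ring
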